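/- Let $x\in(0,1)$ and $\ell\in\{0,\dots,n\}$ with $x\in[\ell/(n+1),(\ell+1)/(n+1))$. Then for the Kantorovich operator, $K_n(\mathrm{sign}(\cdot-x))(x)=2\sum_{k=\ell+1}^n p_{n,k}(x)-1+2p_{n,\ell}(x)[(\ell+1)-(n+1)x]$, and hence $|K_n(\mathrm{sign}(\cdot-x))(x)|\le 2\left|\sum_{(n+1)x<k\le n}p_{n,k}(x)-\tfrac12\right|+2p_{n,\ell}(x)$. -/

import Mathlib

open Set MeasureTheory Finset

/-- Bernstein basis polynomial `p_{n,k}(x) = C(n,k) x^k (1-x)^{n-k}`. -/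
noncomputable def bernstein' (n k : ℕ) (x : ℝ) : ℝ :=
  (n.choose k : ℝ) * x ^ k * (1 - x) ^ (n - k)

/-- The Kantorovich operator
`K_n f(x) = (n+1) ∑_{k=0}^n p_{n,k}(x) ∫_{k/(n+1)}^{(k+1)/(n+1)} f(t) dt`. -/
noncomputable def kantorovich (n : ℕ) (f : ℝ → ℝ) (x : ℝ) : ℝ :=
  (n + 1 : ℝ) * ∑ k ∈ Finset.range (n + 1),
    bernstein' n k x * ∫ t in ((k : ℝ) / (n + 1))..(((k : ℝ) + 1) / (n + 1)), f t

/-!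
`|· - x|` is an antiderivative of `sign(· - x)` off the single point `x`, so each cell integral
is a difference of distances to `x`. After scaling by `n + 1`, the cells left of the one containing
`x` contribute `-1`, those right of it `+1`, and the cell `ℓ` containing `x` contributes
`2(ℓ + 1 - (n + 1)x) - 1`; summing against the Bernstein weights, which add up to `1`, gives the
identity. The estimate then follows from `0 ≤ ℓ + 1 - (n + 1)x ≤ 1`.
-/

theorem Real.monotone_sign : Monotone Real.sign := by
  intro a b hab
  unfold Real.sign
  split_ifs <;> linarith

theorem hasDerivAt_abs_sub_const {x t : ℝ} (h : t ≠ x) :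
    HasDerivAt (fun s => |s - x|) (Real.sign (t - x)) t := by
  rcases h.lt_or_gt with h | h
  · rw [Real.sign_of_neg (sub_neg.2 h)]
    exact (hasDerivAt_abs_neg (sub_neg.2 h)).comp_sub_const t x
  · rw [Real.sign_of_pos (sub_pos.2 h)]
    exact (hasDerivAt_abs_pos (sub_pos.2 h)).comp_sub_const t x

theorem integral_sign_sub_const (x a b : ℝ) :
    ∫ t in a..b, Real.sign (t - x) = |b - x| - |a - x| :=
  integral_eq_of_hasDerivAt_off_countable (fun t => |t - x|) _ (countable_singleton x)
    (by fun_prop) (fun t ht => hasDerivAt_abs_sub_const ht.2)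
    (Real.monotone_sign.comp fun _ _ h => sub_le_sub_right h x).intervalIntegrable

theorem bernstein'_nonneg (n k : ℕ) {x : ℝ} (h0 : 0 ≤ x) (h1 : x ≤ 1) : 0 ≤ bernstein' n k x :=
  mul_nonneg (mul_nonneg (Nat.cast_nonneg _) (pow_nonneg h0 _)) (pow_nonneg (sub_nonneg.2 h1) _)

theorem sum_bernstein' (n : ℕ) (x : ℝ) : ∑ k ∈ range (n + 1), bernstein' n k x = 1 := by
  have h : ∑ k ∈ range (n + 1), bernstein' n k x = (x + (1 - x)) ^ n := by
    rw [add_pow]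
    exact sum_congr rfl fun k _ => by rw [bernstein']; ring
  rw [h, add_sub_cancel, one_pow]

theorem kantorovich_sign_sub_const (n : ℕ) (x z : ℝ) :
    kantorovich n (fun t => Real.sign (t - x)) z =
      ∑ k ∈ range (n + 1), bernstein' n k z * (|k + 1 - (n + 1) * x| - |k - (n + 1) * x|) := by
  have hN : (0 : ℝ) < n + 1 := by positivity
  have hscale (a : ℝ) : |a / (n + 1) - x| = |a - (n + 1) * x| / (n + 1) := by
    rw [div_sub' hN.ne', abs_div, abs_of_pos hN, mul_comm]
  rw [kantorovich, mul_sum]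
  refine sum_congr rfl fun k _ => ?_
  rw [integral_sign_sub_const, hscale, hscale]
  field_simp

theorem abs_natCast_add_one_sub_sub_abs {ℓ : ℕ} {y : ℝ} (h1 : ℓ ≤ y) (h2 : y < ℓ + 1) (k : ℕ) :
    |k + 1 - y| - |k - y| =
      2 * (if ℓ < k then 1 else 0) - 1 + if k = ℓ then 2 * (ℓ + 1 - y) else 0 := by
  rcases lt_trichotomy k ℓ with hk | rfl | hk
  · have : (k : ℝ) + 1 ≤ ℓ := by exact_mod_cast hk
    rw [if_neg hk.not_gt, if_neg hk.ne, abs_of_nonpos (by linarith), abs_of_neg (by linarith)]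
    ring
  · rw [if_neg (lt_irrefl k), if_pos rfl, abs_of_pos (by linarith), abs_of_nonpos (by linarith)]
    ring
  · have : (ℓ : ℝ) + 1 ≤ k := by exact_mod_cast hk
    rw [if_pos hk, if_neg hk.ne', abs_of_pos (by linarith), abs_of_pos (by linarith)]
    ring

theorem filter_range_lt_eq_Ioc (n ℓ : ℕ) : (range (n + 1)).filter (ℓ < ·) = Finset.Ioc ℓ n := by
  ext k
  simp only [Finset.mem_filter, Finset.mem_range, Finset.mem_Ioc]
  omega

theorem kantorovich_sign_sub_const_eq {n ℓ : ℕ} (hℓ : ℓ ≤ n) {x : ℝ} (h1 : ℓ ≤ (n + 1) * x)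
    (h2 : (n + 1) * x < ℓ + 1) (z : ℝ) :
    kantorovich n (fun t => Real.sign (t - x)) z =
      2 * (∑ k ∈ Finset.Ioc ℓ n, bernstein' n k z) - 1
        + 2 * bernstein' n ℓ z * ((ℓ + 1) - (n + 1) * x) := by
  simp_rw [kantorovich_sign_sub_const, abs_natCast_add_one_sub_sub_abs h1 h2, mul_add, mul_sub,
    sum_add_distrib, sum_sub_distrib, mul_ite, mul_zero]
  rw [← sum_filter, ← sum_filter, filter_range_lt_eq_Ioc, filter_eq',
    if_pos (mem_range_succ_iff.2 hℓ), sum_singleton, ← sum_mul, ← sum_mul, sum_bernstein']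
  ring

theorem lt_natCast_iff_of_le_of_lt_add_one {ℓ k : ℕ} {y : ℝ} (h1 : ℓ ≤ y) (h2 : y < ℓ + 1) :
    y < k ↔ ℓ < k := by
  refine ⟨fun h => by exact_mod_cast h1.trans_lt h, fun h => ?_⟩
  have : (ℓ : ℝ) + 1 ≤ k := by exact_mod_cast h
  linarith

theorem abs_two_mul_sub_one_add_le {S p c : ℝ} (hp : 0 ≤ p) (hc0 : 0 ≤ c) (hc1 : c ≤ 1) :
    |2 * S - 1 + 2 * p * c| ≤ 2 * |S - 1 / 2| + 2 * p :=
  calc |2 * S - 1 + 2 * p * c|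
      ≤ |2 * S - 1| + |2 * p * c| := abs_add_le _ _
    _ = 2 * |S - 1 / 2| + 2 * p * c := by
        rw [abs_of_nonneg (by positivity : 0 ≤ 2 * p * c), show 2 * S - 1 = 2 * (S - 1 / 2) by ring, abs_mul,
          abs_two]
    _ ≤ 2 * |S - 1 / 2| + 2 * p := by nlinarith

/-- The value of the Kantorovich operator on `sign(· - x)` for
`x ∈ [ℓ/(n+1), (ℓ+1)/(n+1))`, and the resulting estimate. -/
theorem stmt19 (n ℓ : ℕ) (hℓ : ℓ ≤ n) (x : ℝ) (hx : x ∈ Set.Ioo (0 : ℝ) 1)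
    (hxl : x ∈ Set.Ico ((ℓ : ℝ) / (n + 1)) (((ℓ : ℝ) + 1) / (n + 1))) :
    kantorovich n (fun t => Real.sign (t - x)) x =
      2 * (∑ k ∈ Finset.Ioc ℓ n, bernstein' n k x) - 1
        + 2 * bernstein' n ℓ x * (((ℓ : ℝ) + 1) - ((n : ℝ) + 1) * x) ∧
    |kantorovich n (fun t => Real.sign (t - x)) x| ≤
      2 * |(∑ k ∈ (Finset.range (n + 1)).filter (fun k : ℕ => ((n : ℝ) + 1) * x < (k : ℝ)),
              bernstein' n k x) - 1 / 2|
        + 2 * bernstein' n ℓ x := by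
  have hN : (0 : ℝ) < n + 1 := by positivity
  have h1 : (ℓ : ℝ) ≤ (n + 1) * x := by rw [← div_le_iff₀' hN]; exact hxl.1
  have h2 : (n + 1) * x < (ℓ : ℝ) + 1 := by rw [← lt_div_iff₀' hN]; exact hxl.2
  have hK := kantorovich_sign_sub_const_eq hℓ h1 h2 x
  refine ⟨hK, ?_⟩
  rw [hK, filter_congr fun k _ => lt_natCast_iff_of_le_of_lt_add_one h1 h2, filter_range_lt_eq_Ioc]
  exact abs_two_mul_sub_one_add_le (bernstein'_nonneg n ℓ hx.1.le hx.2.le)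
    (by linarith) (by linarith)
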